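/- arXiv:2207.03130 — 2 statements merged into one kernel-verified Lean document; each statement's English description precedes it below -/
import Mathlib

section
/- There is no 4-regular planar simple graph on 7 vertices. -/
open SimpleGraph

/-- `H` is a minor of `G`: branch sets are nonempty, connected, pairwise disjoint,
and adjacency of `H` is witnessed by edges between branch sets. -/
def SimpleGraph.HasMinor {V W : Type*} (G : SimpleGraph V) (H : SimpleGraph W) : Prop :=
  ∃ f : W → Set V,
    (∀ w, (f w).Nonempty) ∧
    (∀ w, (G.induce (f w)).Connected) ∧
    (∀ w₁ w₂, w₁ ≠ w₂ → Disjoint (f w₁) (f w₂)) ∧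
    ∀ w₁ w₂, H.Adj w₁ w₂ → ∃ v₁ ∈ f w₁, ∃ v₂ ∈ f w₂, G.Adj v₁ v₂

/-- Planarity via Wagner's theorem: no `K₅` minor and no `K₃,₃` minor. -/
def SimpleGraph.Planar {V : Type*} (G : SimpleGraph V) : Prop :=
  ¬ G.HasMinor (completeGraph (Fin 5)) ∧
  ¬ G.HasMinor (completeBipartiteGraph (Fin 3) (Fin 3))

/-- Outerplanarity: no `K₄` minor and no `K₂,₃` minor. -/
def SimpleGraph.Outerplanar {V : Type*} (G : SimpleGraph V) : Prop :=
  ¬ G.HasMinor (completeGraph (Fin 4)) ∧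
  ¬ G.HasMinor (completeBipartiteGraph (Fin 2) (Fin 3))

/-- The matching number: the largest number of edges of a matching. -/
noncomputable def SimpleGraph.matchingNumber {V : Type*} (G : SimpleGraph V) : ℕ :=
  sSup {n | ∃ M : G.Subgraph, M.IsMatching ∧ M.edgeSet.ncard = n}

/-- A proper edge coloring: edges sharing an endpoint get distinct colors. -/
def SimpleGraph.IsProperEdgeColoring {V : Type*} {k : ℕ} (G : SimpleGraph V)
    (c : G.edgeSet → Fin k) : Prop :=
  ∀ e f : G.edgeSet, e ≠ f → (∃ v, v ∈ (e : Sym2 V) ∧ v ∈ (f : Sym2 V)) → c e ≠ c f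

/-- A graph is factor-critical if deleting any vertex leaves a graph with a perfect matching. -/
def SimpleGraph.FactorCritical {V : Type*} (G : SimpleGraph V) : Prop :=
  ∀ v : V, ∃ M : (G.induce ({v}ᶜ : Set V)).Subgraph, M.IsPerfectMatching

/-- `K₅` minus the edge between vertices `0` and `1`. -/
def K5minus : SimpleGraph (Fin 5) where
  Adj v w := v ≠ w ∧ ¬(v = 0 ∧ w = 1) ∧ ¬(v = 1 ∧ w = 0)
  symm := ⟨fun v w h => ⟨h.1.symm, fun hc => h.2.2 ⟨hc.2, hc.1⟩, fun hc => h.2.1 ⟨hc.2, hc.1⟩⟩⟩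
  loopless := ⟨fun v h => h.1 rfl⟩

instance : DecidableRel K5minus.Adj := fun v w =>
  inferInstanceAs (Decidable (v ≠ w ∧ ¬(v = 0 ∧ w = 1) ∧ ¬(v = 1 ∧ w = 0)))

/- ### Auxiliary lemmas -/

private lemma ns' {V : Type*} {G : SimpleGraph V} {u v : V} (h : ¬G.Adj u v) : ¬G.Adj v u :=
  fun h' => h h'.symm

private lemma conn1 {V : Type*} (G : SimpleGraph V) (v : V) : (G.induce {v}).Connected := by
  rw [SimpleGraph.connected_iff]
  refine ⟨fun a b => ?_, ⟨⟨v, rfl⟩⟩⟩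
  have : a = b := Subtype.ext (a.2.trans b.2.symm)
  exact this ▸ SimpleGraph.Reachable.refl _

private lemma conn2 {V : Type*} (G : SimpleGraph V) {x y : V} (h : G.Adj x y) :
    (G.induce {x, y}).Connected := by
  rw [SimpleGraph.connected_iff]
  refine ⟨fun a b => ?_, ⟨⟨x, Or.inl rfl⟩⟩⟩
  have ha := a.2
  have hb := b.2
  simp only [Set.mem_insert_iff, Set.mem_singleton_iff] at ha hb
  rcases ha with ha | ha <;> rcases hb with hb | hb
  · exact (Subtype.ext (ha.trans hb.symm) : a = b) ▸ SimpleGraph.Reachable.refl _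
  · exact SimpleGraph.Adj.reachable (show G.Adj a.1 b.1 by rw [ha, hb]; exact h)
  · exact SimpleGraph.Adj.reachable (show G.Adj a.1 b.1 by rw [ha, hb]; exact h.symm)
  · exact (Subtype.ext (ha.trans hb.symm) : a = b) ▸ SimpleGraph.Reachable.refl _

private lemma disj11 {V : Type*} {a b : V} (h : a ≠ b) :
    Disjoint ({a} : Set V) ({b} : Set V) := by
  rw [Set.disjoint_singleton_right]
  simp only [Set.mem_singleton_iff]
  exact fun h' => h h'.symm

private lemma disj21 {V : Type*} {x y a : V} (h1 : x ≠ a) (h2 : y ≠ a) :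
    Disjoint ({x, y} : Set V) ({a} : Set V) := by
  rw [Set.disjoint_singleton_right]
  simp only [Set.mem_insert_iff, Set.mem_singleton_iff]
  rintro (h | h)
  exacts [h1 h.symm, h2 h.symm]

private lemma exists_ne6 (x0 x1 x2 x3 x4 x5 : Fin 7) :
    ∃ y : Fin 7, y ≠ x0 ∧ y ≠ x1 ∧ y ≠ x2 ∧ y ≠ x3 ∧ y ≠ x4 ∧ y ≠ x5 := by
  by_contra h
  push_neg at h
  have hsub : (Finset.univ : Finset (Fin 7)) ⊆ {x0, x1, x2, x3, x4, x5} := by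
    intro y _
    simp only [Finset.mem_insert, Finset.mem_singleton]
    by_contra hy
    push_neg at hy
    exact hy.2.2.2.2.2 (h y hy.1 hy.2.1 hy.2.2.1 hy.2.2.2.1 hy.2.2.2.2.1)
  have hc := Finset.card_le_card hsub
  have i1 := Finset.card_insert_le x0 ({x1, x2, x3, x4, x5} : Finset (Fin 7))
  have i2 := Finset.card_insert_le x1 ({x2, x3, x4, x5} : Finset (Fin 7))
  have i3 := Finset.card_insert_le x2 ({x3, x4, x5} : Finset (Fin 7))
  have i4 := Finset.card_insert_le x3 ({x4, x5} : Finset (Fin 7))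
  have i5 := Finset.card_insert_le x4 ({x5} : Finset (Fin 7))
  have i6 : ({x5} : Finset (Fin 7)).card = 1 := Finset.card_singleton _
  rw [Finset.card_univ, Fintype.card_fin] at hc
  omega

private lemma eight_ne {l : List (Fin 7)} (h8 : l.length = 8) (hn : l.Nodup) : False := by
  have := hn.length_le_card
  rw [h8] at this
  simp at this

private lemma key_lemma (G : SimpleGraph (Fin 7)) [DecidableRel G.Adj]
    (hdeg : ∀ v, G.degree v = 4) (v : Fin 7) :
    ∃ a b : Fin 7, a ≠ b ∧ v ≠ a ∧ v ≠ b ∧ ¬G.Adj v a ∧ ¬G.Adj v b ∧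
      (∀ w, ¬G.Adj v w → w = v ∨ w = a ∨ w = b) := by
  have hc : ((Gᶜ).neighborFinset v).card = 2 := by
    rw [card_neighborFinset_eq_degree, G.degree_compl, hdeg]
    simp
  obtain ⟨a, b, hab, hset⟩ := Finset.card_eq_two.mp hc
  have hmem : ∀ w, Gᶜ.Adj v w ↔ (w = a ∨ w = b) := by
    intro w
    rw [← mem_neighborFinset, hset]
    simp
  have hca : Gᶜ.Adj v a := (hmem a).mpr (Or.inl rfl)
  have hcb : Gᶜ.Adj v b := (hmem b).mpr (Or.inr rfl)
  rw [compl_adj G v] at hca hcb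
  refine ⟨a, b, hab, hca.1, hcb.1, hca.2, hcb.2, fun w hw => ?_⟩
  by_cases hwv : w = v
  · exact Or.inl hwv
  · exact Or.inr ((hmem w).mp ((compl_adj G v w).mpr ⟨fun h => hwv h.symm, hw⟩))

private lemma next_lemma (G : SimpleGraph (Fin 7)) [DecidableRel G.Adj]
    (hdeg : ∀ v, G.degree v = 4) (v u : Fin 7) (hvu : v ≠ u) (hn : ¬G.Adj v u) :
    ∃ w, w ≠ v ∧ w ≠ u ∧ ¬G.Adj v w ∧ ∀ x, ¬G.Adj v x → x = v ∨ x = u ∨ x = w := by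
  obtain ⟨p, q, hpq, hvp, hvq, hnp, hnq, hch⟩ := key_lemma G hdeg v
  rcases hch u hn with h | h | h
  · exact absurd h.symm hvu
  · exact ⟨q, Ne.symm hvq, fun e => hpq ((e.trans h).symm), hnq,
      fun x hx => (hch x hx).imp id (Or.imp (fun e => e.trans h.symm) id)⟩
  · exact ⟨p, Ne.symm hvp, fun e => hpq (e.trans h), hnp,
      fun x hx => (hch x hx).imp id
        (fun o => o.elim (fun e => Or.inr e) (fun e => Or.inl (e.trans h.symm)))⟩

private lemma char2_lemma (G : SimpleGraph (Fin 7)) [DecidableRel G.Adj]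
    (hdeg : ∀ v, G.degree v = 4) (v p q : Fin 7) (hpq : p ≠ q) (hvp : v ≠ p) (hvq : v ≠ q)
    (hnp : ¬G.Adj v p) (hnq : ¬G.Adj v q) :
    ∀ x, ¬G.Adj v x → x = v ∨ x = p ∨ x = q := by
  intro x hx
  obtain ⟨a, b, hab, hva, hvb, hna, hnb, hch⟩ := key_lemma G hdeg v
  have hp : p = a ∨ p = b := by
    rcases hch p hnp with h | h | h
    · exact absurd h.symm hvp
    · exact Or.inl h
    · exact Or.inr h
  have hq : q = a ∨ q = b := by
    rcases hch q hnq with h | h | h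
    · exact absurd h.symm hvq
    · exact Or.inl h
    · exact Or.inr h
  rcases hch x hx with h | h | h
  · exact Or.inl h
  · rcases hp with hp | hp
    · exact Or.inr (Or.inl (h.trans hp.symm))
    · rcases hq with hq | hq
      · exact Or.inr (Or.inr (h.trans hq.symm))
      · exact absurd (hp.trans hq.symm) hpq
  · rcases hq with hq | hq
    · rcases hp with hp | hp
      · exact absurd (hp.trans hq.symm) hpq
      · exact Or.inr (Or.inl (h.trans hp.symm))
    · exact Or.inr (Or.inr (h.trans hq.symm))

private lemma adj_of {G : SimpleGraph (Fin 7)} {v p q x : Fin 7}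
    (hch : ∀ y, ¬G.Adj v y → y = v ∨ y = p ∨ y = q)
    (h1 : x ≠ v) (h2 : x ≠ p) (h3 : x ≠ q) : G.Adj v x := by
  by_contra h
  rcases hch x h with h' | h' | h'
  exacts [h1 h', h2 h', h3 h']

private lemma hasMinor_K33 {V : Type*} (G : SimpleGraph V) (s0 s1 s2 t0 t1 t2 : Set V)
    (hn0 : s0.Nonempty) (hn1 : s1.Nonempty) (hn2 : s2.Nonempty)
    (hm0 : t0.Nonempty) (hm1 : t1.Nonempty) (hm2 : t2.Nonempty)
    (hc0 : (G.induce s0).Connected) (hc1 : (G.induce s1).Connected)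
    (hc2 : (G.induce s2).Connected) (hd0 : (G.induce t0).Connected)
    (hd1 : (G.induce t1).Connected) (hd2 : (G.induce t2).Connected)
    (hs01 : Disjoint s0 s1) (hs02 : Disjoint s0 s2) (hs12 : Disjoint s1 s2)
    (ht01 : Disjoint t0 t1) (ht02 : Disjoint t0 t2) (ht12 : Disjoint t1 t2)
    (hx00 : Disjoint s0 t0) (hx01 : Disjoint s0 t1) (hx02 : Disjoint s0 t2)
    (hx10 : Disjoint s1 t0) (hx11 : Disjoint s1 t1) (hx12 : Disjoint s1 t2)
    (hx20 : Disjoint s2 t0) (hx21 : Disjoint s2 t1) (hx22 : Disjoint s2 t2)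
    (ha00 : ∃ v₁ ∈ s0, ∃ v₂ ∈ t0, G.Adj v₁ v₂) (ha01 : ∃ v₁ ∈ s0, ∃ v₂ ∈ t1, G.Adj v₁ v₂)
    (ha02 : ∃ v₁ ∈ s0, ∃ v₂ ∈ t2, G.Adj v₁ v₂) (ha10 : ∃ v₁ ∈ s1, ∃ v₂ ∈ t0, G.Adj v₁ v₂)
    (ha11 : ∃ v₁ ∈ s1, ∃ v₂ ∈ t1, G.Adj v₁ v₂) (ha12 : ∃ v₁ ∈ s1, ∃ v₂ ∈ t2, G.Adj v₁ v₂)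
    (ha20 : ∃ v₁ ∈ s2, ∃ v₂ ∈ t0, G.Adj v₁ v₂) (ha21 : ∃ v₁ ∈ s2, ∃ v₂ ∈ t1, G.Adj v₁ v₂)
    (ha22 : ∃ v₁ ∈ s2, ∃ v₂ ∈ t2, G.Adj v₁ v₂) :
    G.HasMinor (completeBipartiteGraph (Fin 3) (Fin 3)) := by
  have flip : ∀ {s t : Set V}, (∃ v₁ ∈ s, ∃ v₂ ∈ t, G.Adj v₁ v₂) →
      ∃ v₁ ∈ t, ∃ v₂ ∈ s, G.Adj v₁ v₂ := by
    rintro s t ⟨x, hx, y, hy, hxy⟩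
    exact ⟨y, hy, x, hx, hxy.symm⟩
  refine ⟨Sum.elim ![s0, s1, s2] ![t0, t1, t2], ?_, ?_, ?_, ?_⟩
  · rintro (i | i) <;> fin_cases i <;>
      simp only [Sum.elim_inl, Sum.elim_inr, Matrix.cons_val_zero, Matrix.cons_val_one,
        Matrix.head_cons, Matrix.cons_val_two, Matrix.tail_cons] <;> assumption
  · rintro (i | i) <;> fin_cases i <;>
      simp only [Sum.elim_inl, Sum.elim_inr, Matrix.cons_val_zero, Matrix.cons_val_one,
        Matrix.head_cons, Matrix.cons_val_two, Matrix.tail_cons] <;> assumption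
  · rintro (i | i) (j | j) hij <;> fin_cases i <;> fin_cases j <;>
      simp only [Sum.elim_inl, Sum.elim_inr, Matrix.cons_val_zero, Matrix.cons_val_one,
        Matrix.head_cons, Matrix.cons_val_two, Matrix.tail_cons] <;>
      first
        | exact absurd rfl hij
        | assumption
        | (apply Disjoint.symm; assumption)
  · rintro (i | i) (j | j) hadj
    · simp [completeBipartiteGraph] at hadj
    · fin_cases i <;> fin_cases j <;>
        simp only [Sum.elim_inl, Sum.elim_inr, Matrix.cons_val_zero, Matrix.cons_val_one,
          Matrix.head_cons, Matrix.cons_val_two, Matrix.tail_cons] <;> assumption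
    · fin_cases i <;> fin_cases j <;>
        simp only [Sum.elim_inl, Sum.elim_inr, Matrix.cons_val_zero, Matrix.cons_val_one,
          Matrix.head_cons, Matrix.cons_val_two, Matrix.tail_cons]
      exacts [flip ha00, flip ha10, flip ha20, flip ha01, flip ha11, flip ha21,
        flip ha02, flip ha12, flip ha22]
    · simp [completeBipartiteGraph] at hadj

theorem stmt2 (G : SimpleGraph (Fin 7)) [DecidableRel G.Adj] (hp : G.Planar) :
    ¬ (∀ v, G.degree v = 4) := by
  intro hdeg
  have key := key_lemma G hdeg
  have next := next_lemma G hdeg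
  have char2 := char2_lemma G hdeg
  have adjw : ∀ {u v : Fin 7}, G.Adj u v →
      ∃ a ∈ ({u} : Set (Fin 7)), ∃ b ∈ ({v} : Set (Fin 7)), G.Adj a b :=
    fun h => ⟨_, rfl, _, rfl, h⟩
  by_cases hT : ∃ x y z : Fin 7, x ≠ y ∧ x ≠ z ∧ y ≠ z ∧ ¬G.Adj x y ∧ ¬G.Adj x z ∧ ¬G.Adj y z
  · -- Case A: a "triangle" of mutual non-neighbors exists; each of its vertices is
    -- adjacent to all other 4 vertices, giving a K₃,₃ subgraph.
    obtain ⟨x, y, z, hxy, hxz, hyz, nxy, nxz, nyz⟩ := hT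
    have chx := char2 x y z hyz hxy hxz nxy nxz
    have chy := char2 y x z hxz (Ne.symm hxy) hyz (ns' nxy) nyz
    have chz := char2 z x y hxy (Ne.symm hxz) (Ne.symm hyz) (ns' nxz) (ns' nyz)
    obtain ⟨w1, hw1x, hw1y, hw1z, -, -, -⟩ := exists_ne6 x y z x y z
    obtain ⟨w2, hw2x, hw2y, hw2z, hw21, -, -⟩ := exists_ne6 x y z w1 x x
    obtain ⟨w3, hw3x, hw3y, hw3z, hw31, hw32, -⟩ := exists_ne6 x y z w1 w2 x
    exact hp.2 (hasMinor_K33 G {x} {y} {z} {w1} {w2} {w3}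
      (Set.singleton_nonempty _) (Set.singleton_nonempty _) (Set.singleton_nonempty _)
      (Set.singleton_nonempty _) (Set.singleton_nonempty _) (Set.singleton_nonempty _)
      (conn1 G x) (conn1 G y) (conn1 G z) (conn1 G w1) (conn1 G w2) (conn1 G w3)
      (disj11 hxy) (disj11 hxz) (disj11 hyz)
      (disj11 (Ne.symm hw21)) (disj11 (Ne.symm hw31)) (disj11 (Ne.symm hw32))
      (disj11 (Ne.symm hw1x)) (disj11 (Ne.symm hw2x)) (disj11 (Ne.symm hw3x))
      (disj11 (Ne.symm hw1y)) (disj11 (Ne.symm hw2y)) (disj11 (Ne.symm hw3y))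
      (disj11 (Ne.symm hw1z)) (disj11 (Ne.symm hw2z)) (disj11 (Ne.symm hw3z))
      (adjw (adj_of chx hw1x hw1y hw1z)) (adjw (adj_of chx hw2x hw2y hw2z))
      (adjw (adj_of chx hw3x hw3y hw3z))
      (adjw (adj_of chy hw1y hw1x hw1z)) (adjw (adj_of chy hw2y hw2x hw2z))
      (adjw (adj_of chy hw3y hw3x hw3z))
      (adjw (adj_of chz hw1z hw1x hw1y)) (adjw (adj_of chz hw2z hw2x hw2y))
      (adjw (adj_of chz hw3z hw3x hw3y)))
  · -- Case B: no such triple; the non-adjacency graph is a 7-cycle.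
    have hT3 : ∀ x y z : Fin 7, x ≠ y → x ≠ z → y ≠ z →
        ¬G.Adj x y → ¬G.Adj x z → ¬G.Adj y z → False :=
      fun x y z h1 h2 h3 n1 n2 n3 => hT ⟨x, y, z, h1, h2, h3, n1, n2, n3⟩
    obtain ⟨a, b, hab, h0a, h0b, n0a, n0b, ch0⟩ := key 0
    obtain ⟨c, hca, hc0, nac, cha⟩ := next a 0 (Ne.symm h0a) (ns' n0a)
    have hcb : c ≠ b := fun h => hT3 0 a b h0a h0b hab n0a n0b (h ▸ nac)
    obtain ⟨d, hdc, hda, ncd, chc⟩ := next c a hca (ns' nac)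
    have hd0 : d ≠ 0 := by
      intro h
      rcases ch0 c (ns' (h ▸ ncd)) with h' | h' | h'
      exacts [hc0 h', hca h', hcb h']
    by_cases hdb : d = b
    · -- subcase: cycle of length 4 through 0,a,c,b; forces a non-adjacent triple elsewhere
      have chb := char2 b 0 c (Ne.symm hc0) (Ne.symm h0b) (Ne.symm hcb) (ns' n0b)
        (ns' (hdb ▸ ncd))
      obtain ⟨f, hf0, hfa, hfc, hfb, -, -⟩ := exists_ne6 0 a c b b b
      obtain ⟨p, q, hpq, hfp, hfq, nfp, nfq, -⟩ := key f
      have hnot : ∀ x : Fin 7, ¬G.Adj f x → x ≠ 0 ∧ x ≠ a ∧ x ≠ c ∧ x ≠ b := by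
        intro x hx
        refine ⟨?_, ?_, ?_, ?_⟩ <;> intro h <;> subst h
        · rcases ch0 f (ns' hx) with h' | h' | h'
          exacts [hf0 h', hfa h', hfb h']
        · rcases cha f (ns' hx) with h' | h' | h'
          exacts [hfa h', hf0 h', hfc h']
        · rcases chc f (ns' hx) with h' | h' | h'
          exacts [hfc h', hfa h', hfb (h'.trans hdb)]
        · rcases chb f (ns' hx) with h' | h' | h'
          exacts [hfb h', hf0 h', hfc h']
      obtain ⟨hp0, hpa, hpc, hpb⟩ := hnot p nfp
      obtain ⟨hq0, hqa, hqc, hqb⟩ := hnot q nfq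
      obtain ⟨r, hrp, hrf, npr, -⟩ := next p f (Ne.symm hfp) (ns' nfp)
      have hnotp : ∀ x : Fin 7, ¬G.Adj p x → x ≠ 0 ∧ x ≠ a ∧ x ≠ c ∧ x ≠ b := by
        intro x hx
        refine ⟨?_, ?_, ?_, ?_⟩ <;> intro h <;> subst h
        · rcases ch0 p (ns' hx) with h' | h' | h'
          exacts [hp0 h', hpa h', hpb h']
        · rcases cha p (ns' hx) with h' | h' | h'
          exacts [hpa h', hp0 h', hpc h']
        · rcases chc p (ns' hx) with h' | h' | h'
          exacts [hpc h', hpa h', hpb (h'.trans hdb)]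
        · rcases chb p (ns' hx) with h' | h' | h'
          exacts [hpb h', hp0 h', hpc h']
      obtain ⟨hr0, hra, hrc, hrb⟩ := hnotp r npr
      have hrq : r = q := by
        by_contra hrq
        refine eight_ne (l := [0, a, c, b, f, p, q, r]) rfl ?_
        simp only [List.nodup_cons, List.mem_cons, List.mem_singleton, List.not_mem_nil,
          not_false_iff, and_true, List.nodup_nil, not_or]
        exact ⟨⟨h0a, Ne.symm hc0, h0b, Ne.symm hf0, Ne.symm hp0, Ne.symm hq0, Ne.symm hr0⟩,
          ⟨Ne.symm hca, hab, Ne.symm hfa, Ne.symm hpa, Ne.symm hqa, Ne.symm hra⟩,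
          ⟨hcb, Ne.symm hfc, Ne.symm hpc, Ne.symm hqc, Ne.symm hrc⟩,
          ⟨Ne.symm hfb, Ne.symm hpb, Ne.symm hqb, Ne.symm hrb⟩,
          ⟨hfp, hfq, Ne.symm hrf⟩, ⟨hpq, Ne.symm hrp⟩, fun h => hrq h.symm⟩
      exact hT3 f p q hfp hfq hpq nfp nfq (hrq ▸ npr)
    · obtain ⟨e, hed, hec, nde, chd⟩ := next d c hdc (ns' ncd)
      have he0 : e ≠ 0 := by
        intro h
        rcases ch0 d (ns' (h ▸ nde)) with h' | h' | h'
        exacts [hd0 h', hda h', hdb h']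
      have hea : e ≠ a := by
        intro h
        rcases cha d (ns' (h ▸ nde)) with h' | h' | h'
        exacts [hda h', hd0 h', hdc h']
      by_cases heb : e = b
      · -- subcase: cycle of length 5 through 0,a,c,d,b; only two vertices remain
        have chb := char2 b 0 d (Ne.symm hd0) (Ne.symm h0b) (Ne.symm hdb) (ns' n0b)
          (ns' (heb ▸ nde))
        obtain ⟨f, hf0, hfa, hfc, hfd, hfb, -⟩ := exists_ne6 0 a c d b b
        obtain ⟨p, q, hpq, hfp, hfq, nfp, nfq, -⟩ := key f
        have hnot : ∀ x : Fin 7, ¬G.Adj f x → x ≠ 0 ∧ x ≠ a ∧ x ≠ c ∧ x ≠ d ∧ x ≠ b := by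
          intro x hx
          refine ⟨?_, ?_, ?_, ?_, ?_⟩ <;> intro h <;> subst h
          · rcases ch0 f (ns' hx) with h' | h' | h'
            exacts [hf0 h', hfa h', hfb h']
          · rcases cha f (ns' hx) with h' | h' | h'
            exacts [hfa h', hf0 h', hfc h']
          · rcases chc f (ns' hx) with h' | h' | h'
            exacts [hfc h', hfa h', hfd h']
          · rcases chd f (ns' hx) with h' | h' | h'
            exacts [hfd h', hfc h', hfb (h'.trans heb)]
          · rcases chb f (ns' hx) with h' | h' | h'
            exacts [hfb h', hf0 h', hfd h']
        obtain ⟨hp0, hpa, hpc, hpd, hpb⟩ := hnot p nfp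
        obtain ⟨hq0, hqa, hqc, hqd, hqb⟩ := hnot q nfq
        refine eight_ne (l := [0, a, c, d, b, f, p, q]) rfl ?_
        simp only [List.nodup_cons, List.mem_cons, List.mem_singleton, List.not_mem_nil,
          not_false_iff, and_true, List.nodup_nil, not_or]
        exact ⟨⟨h0a, Ne.symm hc0, Ne.symm hd0, h0b, Ne.symm hf0, Ne.symm hp0, Ne.symm hq0⟩,
          ⟨Ne.symm hca, Ne.symm hda, hab, Ne.symm hfa, Ne.symm hpa, Ne.symm hqa⟩,
          ⟨Ne.symm hdc, hcb, Ne.symm hfc, Ne.symm hpc, Ne.symm hqc⟩,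
          ⟨hdb, Ne.symm hfd, Ne.symm hpd, Ne.symm hqd⟩,
          ⟨Ne.symm hfb, Ne.symm hpb, Ne.symm hqb⟩, ⟨hfp, hfq⟩, hpq⟩
      · obtain ⟨t, hte, htd, net, che⟩ := next e d hed (ns' nde)
        have ht0 : t ≠ 0 := by
          intro h
          rcases ch0 e (ns' (h ▸ net)) with h' | h' | h'
          exacts [he0 h', hea h', heb h']
        have hta : t ≠ a := by
          intro h
          rcases cha e (ns' (h ▸ net)) with h' | h' | h'
          exacts [hea h', he0 h', hec h']
        have htc : t ≠ c := by
          intro h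
          rcases chc e (ns' (h ▸ net)) with h' | h' | h'
          exacts [hec h', hea h', hed h']
        by_cases htb : t = b
        · -- subcase: cycle of length 6; a single vertex remains
          have chb := char2 b 0 e (Ne.symm he0) (Ne.symm h0b) (Ne.symm heb) (ns' n0b)
            (ns' (htb ▸ net))
          obtain ⟨f, hf0, hfa, hfc, hfd, hfe, hfb⟩ := exists_ne6 0 a c d e b
          obtain ⟨p, q, hpq, hfp, hfq, nfp, nfq, -⟩ := key f
          have hnot : ∀ x : Fin 7, ¬G.Adj f x →
              x ≠ 0 ∧ x ≠ a ∧ x ≠ c ∧ x ≠ d ∧ x ≠ e ∧ x ≠ b := by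
            intro x hx
            refine ⟨?_, ?_, ?_, ?_, ?_, ?_⟩ <;> intro h <;> subst h
            · rcases ch0 f (ns' hx) with h' | h' | h'
              exacts [hf0 h', hfa h', hfb h']
            · rcases cha f (ns' hx) with h' | h' | h'
              exacts [hfa h', hf0 h', hfc h']
            · rcases chc f (ns' hx) with h' | h' | h'
              exacts [hfc h', hfa h', hfd h']
            · rcases chd f (ns' hx) with h' | h' | h'
              exacts [hfd h', hfc h', hfe h']
            · rcases che f (ns' hx) with h' | h' | h'
              exacts [hfe h', hfd h', hfb (h'.trans htb)]
            · rcases chb f (ns' hx) with h' | h' | h'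
              exacts [hfb h', hf0 h', hfe h']
          obtain ⟨hp0, hpa, hpc, hpd, hpe, hpb⟩ := hnot p nfp
          refine eight_ne (l := [0, a, c, d, e, b, f, p]) rfl ?_
          simp only [List.nodup_cons, List.mem_cons, List.mem_singleton, List.not_mem_nil,
            not_false_iff, and_true, List.nodup_nil, not_or]
          exact ⟨⟨h0a, Ne.symm hc0, Ne.symm hd0, Ne.symm he0, h0b, Ne.symm hf0, Ne.symm hp0⟩,
            ⟨Ne.symm hca, Ne.symm hda, Ne.symm hea, hab, Ne.symm hfa, Ne.symm hpa⟩,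
            ⟨Ne.symm hdc, Ne.symm hec, hcb, Ne.symm hfc, Ne.symm hpc⟩,
            ⟨Ne.symm hed, hdb, Ne.symm hfd, Ne.symm hpd⟩,
            ⟨heb, Ne.symm hfe, Ne.symm hpe⟩, ⟨Ne.symm hfb, Ne.symm hpb⟩, hfp⟩
        · -- main line: the non-adjacency graph is the 7-cycle 0-a-c-d-e-t-b-0
          obtain ⟨u, hug, hue, ngu, chg⟩ := next t e hte (ns' net)
          have hu0 : u ≠ 0 := by
            intro h
            rcases ch0 t (ns' (h ▸ ngu)) with h' | h' | h'
            exacts [ht0 h', hta h', htb h']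
          have hua : u ≠ a := by
            intro h
            rcases cha t (ns' (h ▸ ngu)) with h' | h' | h'
            exacts [hta h', ht0 h', htc h']
          have huc : u ≠ c := by
            intro h
            rcases chc t (ns' (h ▸ ngu)) with h' | h' | h'
            exacts [htc h', hta h', htd h']
          have hud : u ≠ d := by
            intro h
            rcases chd t (ns' (h ▸ ngu)) with h' | h' | h'
            exacts [htd h', htc h', hte h']
          have hub : u = b := by
            by_contra hub
            refine eight_ne (l := [0, a, c, d, e, t, b, u]) rfl ?_
            simp only [List.nodup_cons, List.mem_cons, List.mem_singleton, List.not_mem_nil,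
              not_false_iff, and_true, List.nodup_nil, not_or]
            exact ⟨⟨h0a, Ne.symm hc0, Ne.symm hd0, Ne.symm he0, Ne.symm ht0, h0b, Ne.symm hu0⟩,
              ⟨Ne.symm hca, Ne.symm hda, Ne.symm hea, Ne.symm hta, hab, Ne.symm hua⟩,
              ⟨Ne.symm hdc, Ne.symm hec, Ne.symm htc, hcb, Ne.symm huc⟩,
              ⟨Ne.symm hed, Ne.symm htd, hdb, Ne.symm hud⟩,
              ⟨Ne.symm hte, heb, Ne.symm hue⟩, ⟨htb, Ne.symm hug⟩, fun h => hub h.symm⟩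
          have ngb : ¬G.Adj t b := hub ▸ ngu
          -- full characterizations around the cycle; derive the K₃,₃ minor
          have A0d : G.Adj 0 d := adj_of ch0 hd0 hda hdb
          have A0e : G.Adj 0 e := adj_of ch0 he0 hea heb
          have A0t : G.Adj 0 t := adj_of ch0 ht0 hta htb
          have Adb : G.Adj d b := adj_of chd (Ne.symm hdb) (Ne.symm hcb) (Ne.symm heb)
          have Aae : G.Adj a e := adj_of cha hea he0 hec
          have Aat : G.Adj a t := adj_of cha hta ht0 htc
          have Aab : G.Adj a b := adj_of cha (Ne.symm hab) (Ne.symm h0b) (Ne.symm hcb)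
          have Ace : G.Adj c e := adj_of chc hec hea hed
          have Act : G.Adj c t := adj_of chc htc hta htd
          have Acb : G.Adj c b := adj_of chc (Ne.symm hcb) (Ne.symm hab) (Ne.symm hdb)
          exact hp.2 (hasMinor_K33 G {0, d} {a} {c} {e} {t} {b}
            ⟨0, Or.inl rfl⟩ (Set.singleton_nonempty _) (Set.singleton_nonempty _)
            (Set.singleton_nonempty _) (Set.singleton_nonempty _) (Set.singleton_nonempty _)
            (conn2 G A0d) (conn1 G a) (conn1 G c) (conn1 G e) (conn1 G t) (conn1 G b)
            (disj21 h0a hda) (disj21 (Ne.symm hc0) hdc) (disj11 (Ne.symm hca))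
            (disj11 (Ne.symm hte)) (disj11 heb) (disj11 htb)
            (disj21 (Ne.symm he0) (Ne.symm hed)) (disj21 (Ne.symm ht0) (Ne.symm htd))
            (disj21 h0b hdb)
            (disj11 (Ne.symm hea)) (disj11 (Ne.symm hta)) (disj11 hab)
            (disj11 (Ne.symm hec)) (disj11 (Ne.symm htc)) (disj11 hcb)
            ⟨0, Or.inl rfl, e, rfl, A0e⟩ ⟨0, Or.inl rfl, t, rfl, A0t⟩
            ⟨d, Or.inr rfl, b, rfl, Adb⟩
            (adjw Aae) (adjw Aat) (adjw Aab)
            (adjw Ace) (adjw Act) (adjw Acb))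
end

section
/- If G is a simple graph with maximum degree at most 2 and matching number at most ν − 1, then |E(G)| ≤ 3(ν − 1). -/
/-! Pick an edge `ab` of a graph of maximum degree at most `d` and delete every edge at `a` or
`b`. At most `2d - 1` edges disappear, since `ab` is counted at both ends, while the matching
number drops by at least one, because `ab` extends any matching of what is left. Induction on
the matching number gives `|E(G)| ≤ (2d - 1) ν(G)`, which for `d = 2` is `3 ν(G)`. -/

open SimpleGraph

open Finset

namespace SimpleGraph

variable {V : Type*} {G G' : SimpleGraph V}

lemma bddAbove_ncard_edgeSet_isMatching [Finite V] (G : SimpleGraph V) :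
    BddAbove {n | ∃ M : G.Subgraph, M.IsMatching ∧ M.edgeSet.ncard = n} :=
  ⟨G.edgeSet.ncard, by
    rintro n ⟨M, -, rfl⟩
    exact Set.ncard_le_ncard M.edgeSet_subset (Set.toFinite _)⟩

lemma Subgraph.IsMatching.ncard_edgeSet_le_matchingNumber [Finite V] {M : G.Subgraph}
    (hM : M.IsMatching) : M.edgeSet.ncard ≤ G.matchingNumber :=
  le_csSup (bddAbove_ncard_edgeSet_isMatching G) ⟨M, hM, rfl⟩

lemma exists_isMatching_ncard_edgeSet_eq_matchingNumber [Finite V] (G : SimpleGraph V) :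
    ∃ M : G.Subgraph, M.IsMatching ∧ M.edgeSet.ncard = G.matchingNumber :=
  Nat.sSup_mem (by exact ⟨0, ⊥, by simp [Subgraph.IsMatching], by simp⟩)
    (bddAbove_ncard_edgeSet_isMatching G)

lemma matchingNumber_lt_of_le_of_adj [Finite V] {a b : V} (hle : G' ≤ G) (hab : G.Adj a b)
    (ha : a ∉ G'.support) (hb : b ∉ G'.support) : G'.matchingNumber < G.matchingNumber := by
  obtain ⟨M', hM', hcard⟩ := exists_isMatching_ncard_edgeSet_eq_matchingNumber G'
  set M := M'.map (Hom.ofLE hle)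
  have hMedge : M.edgeSet = M'.edgeSet := by simp [M]
  have hMsupport : M.support ⊆ G'.support := fun x ⟨w, hw⟩ ↦ by
    simp only [M, Subgraph.map_adj, Hom.coe_ofLE, Relation.map_id_id] at hw
    exact ⟨w, M'.adj_sub hw⟩
  have hdisj : Disjoint M.support (G.subgraphOfAdj hab).support := by
    rw [support_subgraphOfAdj, Set.disjoint_insert_right, Set.disjoint_singleton_right]
    exact ⟨fun h ↦ ha (hMsupport h), fun h ↦ hb (hMsupport h)⟩
  have hab_notMem : s(a, b) ∉ M'.edgeSet := fun h ↦ ha ⟨b, M'.adj_sub h⟩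
  have hN : (M ⊔ G.subgraphOfAdj hab).IsMatching :=
    (hM'.map_ofLE hle).sup (.subgraphOfAdj hab) hdisj
  calc G'.matchingNumber < (M ⊔ G.subgraphOfAdj hab).edgeSet.ncard := by
        rw [Subgraph.edgeSet_sup, hMedge, edgeSet_subgraphOfAdj,
          Set.ncard_union_eq (by simpa using hab_notMem) (Set.toFinite _) (Set.toFinite _),
          Set.ncard_singleton, hcard]
        omega
    _ ≤ G.matchingNumber := hN.ncard_edgeSet_le_matchingNumber

lemma degree_deleteIncidenceSet_lt [Fintype V] [DecidableEq V] [DecidableRel G.Adj] {a b : V}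
    (hab : G.Adj a b) : (G.deleteIncidenceSet a).degree b < G.degree b := by
  refine card_lt_card <| (ssubset_iff_of_subset fun v hv ↦ ?_).2 ⟨a, ?_, ?_⟩
  · simp only [mem_neighborFinset, deleteIncidenceSet_adj] at hv ⊢
    exact hv.1
  · simpa using hab.symm
  · simp [deleteIncidenceSet_adj]

lemma card_edgeFinset_add_one_le_of_adj [Fintype V] [DecidableEq V] [DecidableRel G.Adj]
    {a b : V} (hab : G.Adj a b) :
    #G.edgeFinset + 1 ≤
      #((G.deleteIncidenceSet a).deleteIncidenceSet b).edgeFinset + G.degree a + G.degree b := by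
  have hdel_a := G.card_edgeFinset_deleteIncidenceSet a
  have hdel_b := (G.deleteIncidenceSet a).card_edgeFinset_deleteIncidenceSet b
  have hdeg_b := degree_deleteIncidenceSet_lt hab
  omega

lemma notMem_support_deleteIncidenceSet_deleteIncidenceSet (a b : V) :
    a ∉ ((G.deleteIncidenceSet a).deleteIncidenceSet b).support ∧
      b ∉ ((G.deleteIncidenceSet a).deleteIncidenceSet b).support := by
  constructor
  · intro h
    exact (support_deleteIncidenceSet_subset G a (support_mono (deleteIncidenceSet_le _ b) h)).2 rfl
  · exact fun h ↦ (support_deleteIncidenceSet_subset _ b h).2 rfl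

theorem card_edgeFinset_le_mul_matchingNumber [Fintype V] [DecidableRel G.Adj] {d : ℕ}
    (hdeg : ∀ v, G.degree v ≤ d) : #G.edgeFinset ≤ (2 * d - 1) * G.matchingNumber := by
  classical
  induction hm : G.matchingNumber using Nat.strong_induction_on generalizing G with
  | _ m ih =>
  obtain he | ⟨e, he⟩ := G.edgeFinset.eq_empty_or_nonempty
  · simp [he]
  induction e using Sym2.ind with | _ a b =>
  have hab : G.Adj a b := by simpa using he
  obtain ⟨ha, hb⟩ := notMem_support_deleteIncidenceSet_deleteIncidenceSet (G := G) a b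
  set G' := (G.deleteIncidenceSet a).deleteIncidenceSet b
  have hcard : #G.edgeFinset + 1 ≤ #G'.edgeFinset + G.degree a + G.degree b :=
    card_edgeFinset_add_one_le_of_adj hab
  have hle : G' ≤ G := (deleteIncidenceSet_le _ b).trans (deleteIncidenceSet_le G a)
  have hdeg' : ∀ v, G'.degree v ≤ d := fun v ↦ (degree_le_of_le hle).trans (hdeg v)
  have hlt : G'.matchingNumber < m := hm ▸ matchingNumber_lt_of_le_of_adj hle hab ha hb
  have ih' := ih _ hlt hdeg' rfl
  calc #G.edgeFinset ≤ #G'.edgeFinset + (2 * d - 1) := by have := hdeg a; have := hdeg b; omega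
    _ ≤ (2 * d - 1) * G'.matchingNumber + (2 * d - 1) := by omega
    _ = (2 * d - 1) * (G'.matchingNumber + 1) := by ring
    _ ≤ (2 * d - 1) * m := Nat.mul_le_mul_left _ hlt

end SimpleGraph

theorem stmt14_general {V : Type*} [Fintype V] (G : SimpleGraph V) [DecidableRel G.Adj]
    (ν : ℕ)
    (hdeg : ∀ v : V, G.degree v ≤ 2) (hm : G.matchingNumber ≤ ν - 1) :
    G.edgeFinset.card ≤ 3 * (ν - 1) := by
  have := card_edgeFinset_le_mul_matchingNumber hdeg
  omega

theorem stmt14 {V : Type*} [Fintype V] [DecidableEq V] (G : SimpleGraph V) [DecidableRel G.Adj]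
    (ν : ℕ)
    (hdeg : ∀ v : V, G.degree v ≤ 2) (hm : G.matchingNumber ≤ ν - 1) :
    G.edgeFinset.card ≤ 3 * (ν - 1) :=
  stmt14_general G ν hdeg hm
end
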